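/- (Core of Lemma 3.2 of the paper: the normalizer of the Lagrangian ideal under the Poisson bracket.) Let k be a field of characteristic zero, n ≥ 1, and let B := MvPolynomial (Fin n ⊕ Fin n) k be the polynomial algebra in variables x_1,…,x_n (indexed by the left summand) and y_1,…,y_n (indexed by the right summand). Define the standard Poisson bracket on B by {f, g} := ∑_{i=1}^n (∂f/∂x_i · ∂g/∂y_i − ∂f/∂y_i · ∂g/∂x_i), where the partial derivatives are MvPolynomial.pderiv. Let I be the ideal of B generated by the variables y_1,…,y_n. Then for every f ∈ B, one has {f, a} ∈ I for all a ∈ I if and only if there exists a constant c ∈ k such that f − c·1 ∈ I. -/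

import Mathlib

/-!
The bracket `{f, ·}` is a derivation, and a derivation preserves an ideal as soon as it maps
its generators into it; since `{f, yⱼ} = ∂f/∂xⱼ`, `f` normalizes `I = (y₁, …, yₙ)` iff every
`∂f/∂xⱼ` lies in `I`. In characteristic zero this forces `f` to be constant modulo `I`: a
`y`-free monomial `m` of `f - f(0)` with `mⱼ ≠ 0` would give `∂f/∂xⱼ` the `y`-free monomial
`m - eⱼ` with coefficient `mⱼ • coeff m f ≠ 0`.
-/

open MvPolynomial

theorem Derivation.mem_span_of_forall_mem {R A : Type*} [CommSemiring R] [CommSemiring A]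
    [Algebra R A] (D : Derivation R A A) {s : Set A} (hs : ∀ x ∈ s, D x ∈ Ideal.span s)
    {a : A} (ha : a ∈ Ideal.span s) : D a ∈ Ideal.span s := by
  induction ha using Submodule.span_induction with
  | mem x hx => exact hs x hx
  | zero => simp
  | add x y _ _ hx hy => simpa using add_mem hx hy
  | smul r x hx hDx =>
    rw [smul_eq_mul, D.leibniz, smul_eq_mul, smul_eq_mul]
    exact add_mem (Ideal.mul_mem_left _ _ hDx) (Ideal.mul_mem_right _ _ hx)

namespace MvPolynomial

variable {σ R : Type*} [CommRing R]

theorem sub_C_coeff_zero_mem_span_X_image [IsAddTorsionFree R] {s : Set σ}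
    {f : MvPolynomial σ R} (hf : ∀ i ∉ s, pderiv i f ∈ Ideal.span (X '' s)) :
    f - C (coeff 0 f) ∈ Ideal.span (X '' s) := by
  classical
  rw [mem_ideal_span_X_image]
  intro m hm
  by_contra! hms
  have hm0 : m ≠ 0 := by rintro rfl; simp at hm
  obtain ⟨i, hi⟩ : ∃ i, m i ≠ 0 := by simpa [Finsupp.ext_iff] using hm0
  have hcoeff : coeff m f ≠ 0 := by simpa [coeff_C, Ne.symm hm0] using hm
  have hle : Finsupp.single i 1 ≤ m := Finsupp.single_le_iff.mpr (Nat.one_le_iff_ne_zero.mpr hi)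
  have hderiv : m - Finsupp.single i 1 ∈ (pderiv i f).support := by
    rw [mem_support_iff, coeff_pderiv, tsub_add_cancel_of_le hle, ← Nat.cast_add_one,
      mul_comm, ← nsmul_eq_mul]
    exact (nsmul_eq_zero_iff_right (Nat.succ_ne_zero _)).not.mpr hcoeff
  obtain ⟨j, hj, hmj⟩ :=
    mem_ideal_span_X_image.mp (hf i fun h => hi (hms i h)) _ hderiv
  exact hmj (by simp [hms j hj])

variable {ι : Type*}

variable (R ι) in
noncomputable def yIdeal : Ideal (MvPolynomial (ι ⊕ ι) R) :=
  Ideal.span (Set.range fun i => X (Sum.inr i))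

theorem yIdeal_eq_span_X_image :
    yIdeal R ι = Ideal.span (X '' Set.range (Sum.inr : ι → ι ⊕ ι)) := by
  rw [yIdeal, ← Set.range_comp]
  rfl

theorem pderiv_inl_mem_yIdeal {a : MvPolynomial (ι ⊕ ι) R} (ha : a ∈ yIdeal R ι) (j : ι) :
    pderiv (Sum.inl j) a ∈ yIdeal R ι := by
  refine (pderiv (Sum.inl j)).mem_span_of_forall_mem ?_ ha
  rintro _ ⟨i, rfl⟩
  simp [pderiv_X_of_ne]

theorem exists_sub_C_mem_yIdeal_iff [IsAddTorsionFree R] (f : MvPolynomial (ι ⊕ ι) R) :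
    (∃ c, f - C c ∈ yIdeal R ι) ↔ ∀ j, pderiv (Sum.inl j) f ∈ yIdeal R ι := by
  refine ⟨fun ⟨c, hc⟩ j => by simpa using pderiv_inl_mem_yIdeal hc j, fun hf => ⟨coeff 0 f, ?_⟩⟩
  rw [yIdeal_eq_span_X_image] at hf ⊢
  refine sub_C_coeff_zero_mem_span_X_image fun i hi => ?_
  cases i with
  | inl j => exact hf j
  | inr j => exact absurd ⟨j, rfl⟩ hi

variable [Fintype ι]

noncomputable def poissonBracket (f : MvPolynomial (ι ⊕ ι) R) :
    Derivation R (MvPolynomial (ι ⊕ ι) R) (MvPolynomial (ι ⊕ ι) R) :=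
  ∑ i, (pderiv (Sum.inl i) f • pderiv (Sum.inr i) - pderiv (Sum.inr i) f • pderiv (Sum.inl i))

theorem poissonBracket_apply (f a : MvPolynomial (ι ⊕ ι) R) :
    poissonBracket f a = ∑ i, (pderiv (Sum.inl i) f * pderiv (Sum.inr i) a -
      pderiv (Sum.inr i) f * pderiv (Sum.inl i) a) := by
  rw [poissonBracket, ← Derivation.coeFnAddMonoidHom_apply, map_sum, Finset.sum_apply]
  simp

theorem poissonBracket_X_inr (f : MvPolynomial (ι ⊕ ι) R) (j : ι) :
    poissonBracket f (X (Sum.inr j)) = pderiv (Sum.inl j) f := by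
  classical
  simp [poissonBracket_apply, pderiv_X, Pi.single_apply]

theorem poissonBracket_mem_yIdeal_iff (f : MvPolynomial (ι ⊕ ι) R) :
    (∀ a ∈ yIdeal R ι, poissonBracket f a ∈ yIdeal R ι) ↔
      ∀ j, pderiv (Sum.inl j) f ∈ yIdeal R ι := by
  refine ⟨fun h j => ?_, fun hf a ha => (poissonBracket f).mem_span_of_forall_mem ?_ ha⟩
  · simpa [poissonBracket_X_inr] using h _ (Ideal.subset_span ⟨j, rfl⟩)
  · rintro _ ⟨j, rfl⟩
    rw [poissonBracket_X_inr]
    exact hf j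

end MvPolynomial

theorem poisson_normalizer_of_lagrangian_ideal_general (k : Type*) [Field k] [CharZero k]
    (n : ℕ) (f : MvPolynomial (Fin n ⊕ Fin n) k) :
    (∀ a ∈ Ideal.span (Set.range fun i : Fin n =>
        (MvPolynomial.X (Sum.inr i) : MvPolynomial (Fin n ⊕ Fin n) k)),
      (∑ i : Fin n,
          (MvPolynomial.pderiv (Sum.inl i) f * MvPolynomial.pderiv (Sum.inr i) a -
            MvPolynomial.pderiv (Sum.inr i) f * MvPolynomial.pderiv (Sum.inl i) a)) ∈
        Ideal.span (Set.range fun i : Fin n =>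
          (MvPolynomial.X (Sum.inr i) : MvPolynomial (Fin n ⊕ Fin n) k))) ↔
    ∃ c : k, f - MvPolynomial.C c ∈ Ideal.span (Set.range fun i : Fin n =>
        (MvPolynomial.X (Sum.inr i) : MvPolynomial (Fin n ⊕ Fin n) k)) := by
  simp_rw [← poissonBracket_apply]
  exact (poissonBracket_mem_yIdeal_iff f).trans (exists_sub_C_mem_yIdeal_iff f).symm

/-- Core of Lemma 3.2 of the paper: in the polynomial Poisson algebra
`B = k[x₁,…,xₙ,y₁,…,yₙ]` with the standard bracket
`{f, g} = ∑ᵢ (∂f/∂xᵢ·∂g/∂yᵢ − ∂f/∂yᵢ·∂g/∂xᵢ)`, a polynomial `f` normalizes the ideal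
`I = (y₁,…,yₙ)` (i.e. `{f, I} ⊆ I`) iff `f` is congruent to a constant modulo `I`. -/
theorem poisson_normalizer_of_lagrangian_ideal (k : Type*) [Field k] [CharZero k]
    (n : ℕ) (hn : 1 ≤ n) (f : MvPolynomial (Fin n ⊕ Fin n) k) :
    (∀ a ∈ Ideal.span (Set.range fun i : Fin n =>
        (MvPolynomial.X (Sum.inr i) : MvPolynomial (Fin n ⊕ Fin n) k)),
      (∑ i : Fin n,
          (MvPolynomial.pderiv (Sum.inl i) f * MvPolynomial.pderiv (Sum.inr i) a -
            MvPolynomial.pderiv (Sum.inr i) f * MvPolynomial.pderiv (Sum.inl i) a)) ∈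
        Ideal.span (Set.range fun i : Fin n =>
          (MvPolynomial.X (Sum.inr i) : MvPolynomial (Fin n ⊕ Fin n) k))) ↔
    ∃ c : k, f - MvPolynomial.C c ∈ Ideal.span (Set.range fun i : Fin n =>
        (MvPolynomial.X (Sum.inr i) : MvPolynomial (Fin n ⊕ Fin n) k)) :=
  poisson_normalizer_of_lagrangian_ideal_general k n f
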